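/- arXiv:1705.09159 — 8 statements merged into one kernel-verified Lean document; each statement's English description precedes it below -/
import Mathlib

section
/- For natural numbers m ≥ 1 and every integer α with 1 ≤ α ≤ m−1, the sum ∑_{j=1}^m γ_{m,j} · j^{2α+1} equals 0, where γ_{m,j} := (-1)^{j-1} · (2/j) · C(2m, m+j) / C(2m, m). Equivalently, for all α ∈ {0,1,...,m−1}, ∑_{j=1}^m γ_{m,j} j^{2α+1} = [α = 0]. -/
noncomputable def gam (m j : ℕ) : ℝ :=
  (-1) ^ (j - 1) * (2 / j) * (Nat.choose (2 * m) (m + j)) / (Nat.choose (2 * m) m)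

/-!
The `2m`-th forward difference of a polynomial of degree `< 2m` vanishes. Evaluated at `-m` on
`x ↦ x ^ (2α)`, this says `∑ₖ (-1)ᵏ C(2m, k) (k - m) ^ (2α) = 0`. The summand is symmetric
under `k ↦ 2m - k`, so folding the sum about its centre `k = m` gives
`C(2m, m) 0 ^ (2α) + 2 ∑_{j=1}^m (-1)ʲ C(2m, m + j) j ^ (2α) = 0`, and dividing by
`-C(2m, m)` is exactly the claimed identity for `γ_{m,j} j ^ (2α+1)`.
-/

open Finset

theorem neg_one_pow_sub_of_le {R : Type*} [Ring R] {k n : ℕ} (h : k ≤ n) :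
    (-1 : R) ^ (n - k) = (-1) ^ n * (-1) ^ k := by
  rw [← Nat.sub_add_cancel h, Nat.add_sub_cancel, pow_add, mul_assoc, ← pow_add, ← two_mul,
    pow_mul, neg_one_sq, one_pow, mul_one]

theorem sum_range_neg_one_pow_mul_choose_mul_add_pow_eq_zero {R : Type*} [CommRing R]
    {j n : ℕ} (h : j < n) (y : R) :
    ∑ k ∈ range (n + 1), (-1) ^ k * n.choose k * (y + k) ^ j = 0 := by
  have hΔ := congr_fun (fwdDiff_iter_pow_eq_zero_of_lt (R := R) h) y
  rw [fwdDiff_iter_eq_sum_shift, Pi.zero_apply] at hΔ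
  calc ∑ k ∈ range (n + 1), (-1) ^ k * n.choose k * (y + k) ^ j
      = (-1) ^ n * ∑ k ∈ range (n + 1), ((-1 : ℤ) ^ (n - k) * n.choose k) • (y + k • 1) ^ j := by
        rw [mul_sum]
        refine sum_congr rfl fun k hk => ?_
        rw [neg_one_pow_sub_of_le (Nat.lt_succ_iff.mp (mem_range.mp hk))]
        simp only [zsmul_eq_mul, nsmul_one]
        push_cast
        ring_nf
        simp
    _ = 0 := by rw [hΔ, mul_zero]

theorem sum_range_two_mul_add_one_eq_add_sum_Icc {M : Type*} [AddCommMonoid M] (m : ℕ)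
    (g : ℕ → M) :
    ∑ k ∈ range (2 * m + 1), g k = g m + ∑ j ∈ Icc 1 m, (g (m - j) + g (m + j)) := by
  induction m generalizing g with
  | zero => simp
  | succ m ih =>
    rw [show 2 * (m + 1) + 1 = 2 * m + 1 + 1 + 1 by ring, sum_range_succ, sum_range_succ',
      ih fun k => g (k + 1), sum_Icc_succ_top (by omega), Nat.sub_self]
    have hshift : ∀ j ∈ Icc 1 m,
        g (m - j + 1) + g (m + j + 1) = g (m + 1 - j) + g (m + 1 + j) := by
      intro j hj
      rw [mem_Icc] at hj
      rw [show m - j + 1 = m + 1 - j by omega, show m + j + 1 = m + 1 + j by omega]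
    rw [sum_congr rfl hshift, show 2 * m + 2 = m + 1 + (m + 1) by ring]
    abel

theorem choose_mul_zero_pow_add_two_mul_sum_Icc_eq_zero {R : Type*} [CommRing R] {α m : ℕ}
    (h : α < m) :
    (2 * m).choose m * (0 : R) ^ (2 * α)
      + 2 * ∑ j ∈ Icc 1 m, (-1) ^ j * (2 * m).choose (m + j) * (j : R) ^ (2 * α) = 0 := by
  set g : ℕ → R := fun k => (-1) ^ k * (2 * m).choose k * (-(m : R) + k) ^ (2 * α)
  have hsum : ∑ k ∈ range (2 * m + 1), g k = 0 :=
    sum_range_neg_one_pow_mul_choose_mul_add_pow_eq_zero (by omega) _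
  have hcentre : g m = (-1) ^ m * ((2 * m).choose m * (0 : R) ^ (2 * α)) := by
    simp only [g, neg_add_cancel]
    ring
  have hpair : ∀ j ∈ Icc 1 m, g (m - j) + g (m + j)
      = (-1) ^ m * (2 * ((-1) ^ j * (2 * m).choose (m + j) * (j : R) ^ (2 * α))) := by
    intro j hj
    have hjm : j ≤ m := (mem_Icc.mp hj).2
    have hchoose : (2 * m).choose (m - j) = (2 * m).choose (m + j) := by
      rw [show m - j = 2 * m - (m + j) by omega, Nat.choose_symm (by omega)]
    have hsign : (-1 : R) ^ (m - j) = (-1) ^ (m + j) := by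
      rw [show m + j = m - j + 2 * j by omega, pow_add, pow_mul, neg_one_sq, one_pow, mul_one]
    simp only [g, hchoose, hsign, Nat.cast_sub hjm, Nat.cast_add, pow_add, pow_mul]
    ring
  rw [sum_range_two_mul_add_one_eq_add_sum_Icc, hcentre, sum_congr rfl hpair, ← mul_sum,
    ← mul_add, ← mul_sum] at hsum
  exact ((isUnit_neg_one.pow m).mul_right_eq_zero).mp hsum

theorem gam_mul_pow_succ {m j : ℕ} (hj : 1 ≤ j) (e : ℕ) :
    gam m j * (j : ℝ) ^ (e + 1)
      = -(2 / (2 * m).choose m) * ((-1) ^ j * (2 * m).choose (m + j) * (j : ℝ) ^ e) := by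
  obtain ⟨i, rfl⟩ := Nat.exists_eq_add_of_le' hj
  rw [gam, Nat.add_sub_cancel, pow_succ, pow_succ]
  field_simp

theorem stmt1 (m : ℕ) (hm : 1 ≤ m) (α : ℕ) (hα : α ≤ m - 1) :
    ∑ j ∈ Finset.Icc 1 m, gam m j * (j : ℝ) ^ (2 * α + 1) =
      if α = 0 then 1 else 0 := by
  have hC : ((2 * m).choose m : ℝ) ≠ 0 := Nat.cast_ne_zero.mpr (Nat.choose_pos (by omega)).ne'
  have hmoment := choose_mul_zero_pow_add_two_mul_sum_Icc_eq_zero (R := ℝ) (show α < m by omega)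
  have hite : (if α = 0 then (1 : ℝ) else 0) = 0 ^ (2 * α) := by simp [zero_pow_eq]
  rw [sum_congr rfl fun j hj => gam_mul_pow_succ (mem_Icc.mp hj).1 _, ← mul_sum, hite,
    neg_mul, div_mul_eq_mul_div, ← neg_div, div_eq_iff hC]
  linear_combination -hmoment
end

section
/- For every natural number m ≥ 1, one has ∑_{j=1}^m |γ_{m,j}| · j < √(π m), where γ_{m,j} := (-1)^{j-1} · (2/j) · C(2m, m+j) / C(2m, m). -/
open Finset Real

theorem Nat.two_mul_sum_choose_add_choose_middle (m : ℕ) :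
    2 * ∑ j ∈ Icc 1 m, (2 * m).choose (m + j) + (2 * m).choose m = 4 ^ m := by
  have hupper : ∑ j ∈ Icc 1 m, (2 * m).choose (m + j) =
      ∑ i ∈ range m, (2 * m).choose (m + 1 + i) := by
    rw [← Ico_add_one_right_eq_Icc, sum_Ico_eq_sum_range]
    simp only [Nat.add_sub_cancel, add_assoc, add_comm 1]
  have hlower : ∑ i ∈ range m, (2 * m).choose i =
      ∑ i ∈ range m, (2 * m).choose (m + 1 + i) := by
    rw [← sum_range_reflect]
    refine sum_congr rfl fun i hi => ?_
    rw [← Nat.choose_symm (by omega)]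
    congr 1
    have := mem_range.mp hi
    omega
  have htotal := Nat.sum_range_choose (2 * m)
  rw [show 2 * m + 1 = m + 1 + m by ring, sum_range_add, sum_range_succ, hlower] at htotal
  rw [hupper, show 4 ^ m = 2 ^ (2 * m) by rw [pow_mul]; rfl]
  omega

theorem abs_gam_mul_self {m j : ℕ} (hj : j ≠ 0) :
    |gam m j| * j = 2 * (2 * m).choose (m + j) / (2 * m).choose m := by
  have hj : (j : ℝ) ≠ 0 := by exact_mod_cast hj
  simp only [gam, abs_div, abs_mul, abs_pow, abs_neg, abs_one, one_pow, one_mul,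
    Nat.abs_cast, abs_two]
  field_simp

theorem sum_abs_gam_mul_self (m : ℕ) :
    ∑ j ∈ Icc 1 m, |gam m j| * j = 4 ^ m / (2 * m).choose m - 1 := by
  have hmid : ((2 * m).choose m : ℝ) ≠ 0 := by exact_mod_cast (Nat.choose_pos (by omega)).ne'
  have hsum : 2 * ∑ j ∈ Icc 1 m, ((2 * m).choose (m + j) : ℝ) + (2 * m).choose m = 4 ^ m := by
    exact_mod_cast Nat.two_mul_sum_choose_add_choose_middle m
  rw [sum_congr rfl fun j hj => abs_gam_mul_self (by grind), ← sum_div, ← mul_sum,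
    eq_sub_iff_add_eq, ← hsum]
  field_simp

theorem Real.Wallis.W_mul_two_mul_add_one (n : ℕ) :
    Wallis.W n * (2 * n + 1) = ((4 : ℝ) ^ n / (2 * n).choose n) ^ 2 := by
  rw [Wallis.W_eq_factorial_ratio, Nat.cast_choose ℝ (by omega : n ≤ 2 * n),
    show 2 * n - n = n by omega,
    show (2 : ℝ) ^ (4 * n) = (4 ^ n) ^ 2 by
      rw [← pow_mul, show (4 : ℝ) = 2 ^ 2 by norm_num, ← pow_mul]; ring_nf]
  field_simp

theorem sub_one_lt_sqrt_of_sq_le {a x : ℝ} (hx : 1 ≤ x) (ha : a ^ 2 ≤ x + 2) : a - 1 < √x := by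
  have hsqrt : 1 ≤ √x := Real.one_le_sqrt.mpr hx
  have : a ^ 2 < (√x + 1) ^ 2 := by nlinarith [Real.sq_sqrt (zero_le_one.trans hx)]
  linarith [abs_lt_of_sq_lt_sq' this (by positivity)]

theorem stmt3 (m : ℕ) (hm : 1 ≤ m) :
    ∑ j ∈ Finset.Icc 1 m, |gam m j| * j < Real.sqrt (Real.pi * m) := by
  rw [sum_abs_gam_mul_self]
  have hm : (1 : ℝ) ≤ m := by exact_mod_cast hm
  refine sub_one_lt_sqrt_of_sq_le (by nlinarith [pi_gt_three]) ?_
  calc ((4 : ℝ) ^ m / (2 * m).choose m) ^ 2 = Wallis.W m * (2 * m + 1) :=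
        (Wallis.W_mul_two_mul_add_one m).symm
    _ ≤ π / 2 * (2 * m + 1) := by gcongr; exact Wallis.W_le m
    _ ≤ π * m + 2 := by linarith [pi_lt_four]
end

section
/- Define τ_{m,j} := ∑_{β ≥ 0, j+2β ≤ m} γ_{m,j+2β} for j ∈ {1,...,m}, where γ_{m,j} := (-1)^{j-1}(2/j)C(2m,m+j)/C(2m,m). Then ∑_{β = 1−m}^{m−1} τ_{m,1+|β|} = 1. -/
noncomputable def tau (m j : ℕ) : ℝ :=
  ∑ β ∈ Finset.range (m + 1), if j + 2 * β ≤ m then gam m (j + 2 * β) else 0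

/-!
Expanding `tau`, the sum runs over pairs `(β, k)` and collects `γ_{m,i}` for `i = 1 + |β| + 2k`;
there are exactly `i` such pairs, so the sum is `∑ i γ_{m,i}`. Since
`i γ_{m,i} = 2 (-1)^(i-1) C(2m, m+i) / C(2m, m)`, it remains to see that the alternating tail
`∑_{i ≥ 1} (-1)^(i-1) C(2m, m+i)` is half the central coefficient: by Pascal's rule its partial
sums telescope to `C(2m-1, m) ± C(2m-1, m+r)`, and `C(2m, m) = 2 C(2m-1, m)`.
-/

open Finset

theorem sum_Icc_neg_one_pow_mul_choose_succ {R : Type*} [CommRing R] (N a r : ℕ) :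
    ∑ j ∈ Icc 1 r, (-1 : R) ^ (j - 1) * (N + 1).choose (a + j) =
      N.choose a + (-1) ^ (r + 1) * N.choose (a + r) := by
  induction r with
  | zero => simp
  | succ r ih =>
    rw [sum_Icc_succ_top (by omega), ih, ← add_assoc a, Nat.choose_succ_succ', Nat.add_sub_cancel]
    push_cast
    ring

theorem two_mul_sum_Icc_neg_one_pow_mul_choose_two_mul {R : Type*} [CommRing R] {m : ℕ}
    (hm : m ≠ 0) :
    2 * ∑ j ∈ Icc 1 m, (-1 : R) ^ (j - 1) * (2 * m).choose (m + j) = (2 * m).choose m := by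
  obtain ⟨n, rfl⟩ : ∃ n, m = n + 1 := ⟨m - 1, by omega⟩
  rw [show 2 * (n + 1) = 2 * n + 1 + 1 by ring, sum_Icc_neg_one_pow_mul_choose_succ,
    Nat.choose_eq_zero_of_lt (by omega : 2 * n + 1 < n + 1 + (n + 1)),
    Nat.choose_succ_succ' (2 * n + 1) n, Nat.choose_symm_half]
  push_cast
  ring

theorem sum_Icc_mul_gam {m : ℕ} (hm : m ≠ 0) : ∑ j ∈ Icc 1 m, (j : ℝ) * gam m j = 1 := by
  have hC : ((2 * m).choose m : ℝ) ≠ 0 := by exact_mod_cast (Nat.choose_pos (by omega)).ne'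
  have hterm : ∀ j ∈ Icc 1 m, (j : ℝ) * gam m j =
      2 * ((-1 : ℝ) ^ (j - 1) * (2 * m).choose (m + j)) / (2 * m).choose m := by
    intro j hj
    have hj : (j : ℝ) ≠ 0 := by have := (mem_Icc.1 hj).1; positivity
    unfold gam
    field_simp
  rw [sum_congr rfl hterm, ← sum_div, ← mul_sum, two_mul_sum_Icc_neg_one_pow_mul_choose_two_mul hm,
    div_self hC]

theorem sum_Icc_sum_range_natAbs_add_two_mul {M : Type*} [AddCommMonoid M] (f : ℕ → M) (m : ℕ) :
    ∑ β ∈ Icc (1 - (m : ℤ)) ((m : ℤ) - 1), ∑ k ∈ range (m + 1),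
        (if 1 + β.natAbs + 2 * k ≤ m then f (1 + β.natAbs + 2 * k) else 0) =
      ∑ i ∈ Icc 1 m, i • f i := by
  rw [← sum_product', ← sum_filter]
  -- the pairs with `1 + |β| + 2k = i` are indexed by `t < i` via `t = max β 0 + k`, `β = 2t + 1 - i`
  rw [sum_nbij' (fun p => (⟨1 + p.1.natAbs + 2 * p.2, p.1.toNat + p.2⟩ : Σ _ : ℕ, ℕ))
    (fun q => ((2 * q.2 + 1 - q.1 : ℤ), min q.2 (q.1 - 1 - q.2)))
    (t := (Icc 1 m).sigma range) (g := fun q => f q.1)]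
  · simp [sum_sigma]
  · intro p hp
    simp only [mem_filter, mem_product, mem_Icc, mem_range] at hp
    simp only [mem_sigma, mem_Icc, mem_range]
    omega
  · intro q hq
    simp only [mem_sigma, mem_Icc, mem_range] at hq
    simp only [mem_filter, mem_product, mem_Icc, mem_range]
    omega
  · intro p hp
    simp only [mem_filter, mem_product, mem_Icc, mem_range] at hp
    ext <;> simp only <;> omega
  · intro q hq
    simp only [mem_sigma, mem_Icc, mem_range] at hq
    refine Sigma.ext ?_ (heq_of_eq ?_) <;> simp only <;> omega
  · intros
    rfl

theorem stmt10 (m : ℕ) (hm : 1 ≤ m) :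
    ∑ β ∈ Finset.Icc (1 - (m : ℤ)) ((m : ℤ) - 1), tau m (1 + β.natAbs) = 1 := by
  simp only [tau]
  rw [sum_Icc_sum_range_natAbs_add_two_mul (gam m)]
  simp only [nsmul_eq_mul]
  exact sum_Icc_mul_gam (Nat.one_le_iff_ne_zero.mp hm)
end

section
/- Reindexing identity: for any natural number m ≥ 1 and any function g : ℤ → ℝ, one has ∑_{j=1}^m γ_{m,j} ∑_{i=0}^{j−1} g(2i − j + 1) = ∑_{β = 1−m}^{m−1} τ_{m,1+|β|} g(β), where γ_{m,j} := (-1)^{j-1}(2/j)C(2m,m+j)/C(2m,m) and τ_{m,j} := ∑_{β≥0: j+2β ≤ m} γ_{m,j+2β}. -/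
open Finset

theorem sum_Icc_sum_range_eq_sum_Icc_sum_range {M : Type*} [AddCommMonoid M] (m : ℕ)
    (F : ℕ → ℤ → M) :
    ∑ j ∈ Icc 1 m, ∑ i ∈ range j, F j (2 * (i : ℤ) - j + 1) =
      ∑ β ∈ Icc (1 - (m : ℤ)) (m - 1), ∑ b ∈ range (m + 1),
        if 1 + β.natAbs + 2 * b ≤ m then F (1 + β.natAbs + 2 * b) β else 0 := by
  simp_rw [← sum_filter]
  rw [sum_sigma', sum_sigma']
  -- `(j, i) ↦ (β, b)` with `β = 2i - j + 1` and `b = (j - 1 - |β|) / 2 = min i (j - 1 - i)`.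
  refine sum_nbij' (fun p => ⟨2 * (p.2 : ℤ) - p.1 + 1, min p.2 (p.1 - 1 - p.2)⟩)
    (fun q => ⟨1 + q.1.natAbs + 2 * q.2, q.2 + q.1.toNat⟩) ?_ ?_ ?_ ?_ ?_
  all_goals
    rintro ⟨_, _⟩
    simp only [mem_sigma, mem_filter, mem_Icc, mem_range, Sigma.mk.injEq, heq_eq_eq]
  iterate 4 omega
  exact fun _ => by congr 1; omega

theorem stmt11_general (m : ℕ) (g : ℤ → ℝ) :
    ∑ j ∈ Finset.Icc 1 m, gam m j *
        ∑ i ∈ Finset.range j, g (2 * (i : ℤ) - (j : ℤ) + 1) =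
      ∑ β ∈ Finset.Icc (1 - (m : ℤ)) ((m : ℤ) - 1), tau m (1 + β.natAbs) * g β := by
  simp_rw [mul_sum, tau, sum_mul, ite_mul, zero_mul]
  exact sum_Icc_sum_range_eq_sum_Icc_sum_range m fun j β => gam m j * g β

theorem stmt11 (m : ℕ) (hm : 1 ≤ m) (g : ℤ → ℝ) :
    ∑ j ∈ Finset.Icc 1 m, gam m j *
        ∑ i ∈ Finset.range j, g (2 * (i : ℤ) - (j : ℤ) + 1) =
      ∑ β ∈ Finset.Icc (1 - (m : ℤ)) ((m : ℤ) - 1), tau m (1 + β.natAbs) * g β :=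
  stmt11_general m g
end

section
/- Maximum of Λ: the function Λ(t) := (1−t)^{t−1}(1+t)^{−1−t} t^2 on (0,1) attains a maximum value Λ* with 0.308 < Λ* < 0.309. -/
noncomputable def Lam (t : ℝ) : ℝ :=
  Real.rpow (1 - t) (t - 1) * Real.rpow (1 + t) (-1 - t) * t ^ 2

/-!
The logarithm of `Lam` is concave on `(0, 1)`: its derivative `log ((1 - t) / (1 + t)) + 2 / t`
is decreasing. That derivative changes sign on `[5/6, 21/25]`, so `Lam` is maximal at its zero
`t*`, and `Lam (5/6) ≤ Lam t*` gives the lower bound since `Lam (5/6) ^ 6 = 5 ^ 12 / 11 ^ 11`.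
For the upper bound, the tangent line of `log ∘ Lam` at `5/6` has slope `12/5 - log 11 < 1/100`,
and `t* - 5/6 ≤ 1/150`, so `Lam t* ≤ Lam (5/6) * exp (1/15000)`.
-/

open Real Set

noncomputable def logLam (t : ℝ) : ℝ :=
  (t - 1) * log (1 - t) + (-1 - t) * log (1 + t) + 2 * log t

noncomputable def logLamDeriv (t : ℝ) : ℝ := log (1 - t) - log (1 + t) + 2 / t

theorem ConcaveOn.le_add_mul_sub_of_hasDerivAt {S : Set ℝ} {f : ℝ → ℝ} {x y f' : ℝ}
    (hf : ConcaveOn ℝ S f) (hx : x ∈ S) (hy : y ∈ S) (hf' : HasDerivAt f f' x) :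
    f y ≤ f x + f' * (y - x) := by
  rcases lt_trichotomy x y with hxy | rfl | hyx
  · have := hf.slope_le_of_hasDerivAt hx hy hxy hf'
    rw [slope_def_field, div_le_iff₀ (sub_pos.2 hxy)] at this
    linarith
  · simp
  · have := hf.le_slope_of_hasDerivAt hy hx hyx hf'
    rw [slope_def_field, le_div_iff₀ (sub_pos.2 hyx)] at this
    linarith

lemma log_le_div_of_pow_le {x : ℝ} {p q : ℕ} (hx : 0 < x) (hq : q ≠ 0)
    (h : x ^ q ≤ 2.7182818283 ^ p) : log x ≤ p / q := by
  rw [log_le_iff_le_exp hx]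
  refine le_of_pow_le_pow_left₀ hq (exp_pos _).le ?_
  rw [← exp_nat_mul, mul_div_cancel₀ _ (Nat.cast_ne_zero.2 hq), ← exp_one_pow]
  exact h.trans (pow_le_pow_left₀ (by norm_num) exp_one_gt_d9.le p)

lemma div_le_log_of_le_pow {x : ℝ} {p q : ℕ} (hx : 0 < x) (hq : q ≠ 0)
    (h : 2.7182818286 ^ p ≤ x ^ q) : p / q ≤ log x := by
  rw [le_log_iff_exp_le hx]
  refine le_of_pow_le_pow_left₀ hq hx.le ?_
  rw [← exp_nat_mul, mul_div_cancel₀ _ (Nat.cast_ne_zero.2 hq), ← exp_one_pow]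
  exact (pow_le_pow_left₀ (exp_pos 1).le exp_one_lt_d9.le p).trans h

lemma Lam_eq_exp_logLam {t : ℝ} (ht : t ∈ Ioo (0 : ℝ) 1) : Lam t = exp (logLam t) := by
  obtain ⟨h0, h1⟩ := ht
  rw [Lam, logLam, exp_add, exp_add, mul_comm (t - 1), mul_comm (-1 - t), mul_comm 2,
    ← rpow_def_of_pos (by linarith), ← rpow_def_of_pos (by linarith), ← rpow_def_of_pos h0]
  norm_cast

lemma hasDerivAt_logLam {t : ℝ} (ht : t ∈ Ioo (0 : ℝ) 1) :
    HasDerivAt logLam (logLamDeriv t) t := by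
  obtain ⟨h0, h1⟩ := ht
  have hminus : HasDerivAt (fun x => log (1 - x)) (-1 / (1 - t)) t :=
    ((hasDerivAt_id' t).const_sub 1).log (by linarith)
  have hplus : HasDerivAt (fun x => log (1 + x)) (1 / (1 + t)) t :=
    ((hasDerivAt_id' t).const_add 1).log (by linarith)
  refine ((((hasDerivAt_id' t).sub_const 1).mul hminus).add
    (((hasDerivAt_id' t).const_sub (-1)).mul hplus) |>.add
    (((hasDerivAt_id' t).log h0.ne').const_mul 2)).congr_deriv ?_
  rw [logLamDeriv]
  field_simp
  ring

lemma logLamDeriv_antitoneOn : AntitoneOn logLamDeriv (Ioo 0 1) := by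
  intro a ha b hb hab
  have := log_le_log (by linarith [hb.2]) (by linarith : 1 - b ≤ 1 - a)
  have := log_le_log (by linarith [ha.1]) (by linarith : 1 + a ≤ 1 + b)
  have := div_le_div_of_nonneg_left zero_le_two ha.1 hab
  simp only [logLamDeriv]
  linarith

lemma concaveOn_logLam : ConcaveOn ℝ (Ioo 0 1) logLam := by
  refine AntitoneOn.concaveOn_of_deriv (convex_Ioo 0 1)
    (fun t ht => (hasDerivAt_logLam ht).continuousAt.continuousWithinAt) ?_ ?_ <;>
    rw [interior_Ioo]
  · exact fun t ht => (hasDerivAt_logLam ht).differentiableAt.differentiableWithinAt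
  · exact logLamDeriv_antitoneOn.congr fun t ht => (hasDerivAt_logLam ht).deriv.symm

lemma logLamDeriv_five_sixths : logLamDeriv (5 / 6) = 12 / 5 - log 11 := by
  rw [logLamDeriv, ← log_div (by norm_num) (by norm_num),
    show (1 - 5 / 6) / (1 + 5 / 6) = (11 : ℝ)⁻¹ by norm_num, log_inv]
  ring

lemma logLamDeriv_twentyone_twentyfifths : logLamDeriv (21 / 25) = 50 / 21 - log (23 / 2) := by
  rw [logLamDeriv, ← log_div (by norm_num) (by norm_num),
    show (1 - 21 / 25) / (1 + 21 / 25) = (23 / 2 : ℝ)⁻¹ by norm_num, log_inv]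
  ring

lemma logLamDeriv_five_sixths_nonneg : 0 ≤ logLamDeriv (5 / 6) := by
  have := log_le_div_of_pow_le (x := 11) (p := 12) (q := 5) (by norm_num) (by norm_num)
    (by norm_num)
  rw [logLamDeriv_five_sixths]
  norm_num at this ⊢
  linarith

lemma logLamDeriv_five_sixths_le : logLamDeriv (5 / 6) ≤ 1 / 100 := by
  have := div_le_log_of_le_pow (x := 11) (p := 239) (q := 100) (by norm_num) (by norm_num)
    (by norm_num)
  rw [logLamDeriv_five_sixths]
  norm_num at this ⊢
  linarith

lemma logLamDeriv_twentyone_twentyfifths_nonpos : logLamDeriv (21 / 25) ≤ 0 := by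
  have := div_le_log_of_le_pow (x := 23 / 2) (p := 50) (q := 21) (by norm_num) (by norm_num)
    (by norm_num)
  rw [logLamDeriv_twentyone_twentyfifths]
  norm_num at this ⊢
  linarith

lemma continuousOn_logLamDeriv : ContinuousOn logLamDeriv (Ioo 0 1) := fun t ht => by
  apply ContinuousAt.continuousWithinAt
  unfold logLamDeriv
  fun_prop (disch := (intro; linarith [ht.1, ht.2]))

lemma exists_logLamDeriv_eq_zero : ∃ t ∈ Icc (5 / 6 : ℝ) (21 / 25), logLamDeriv t = 0 :=
  intermediate_value_Icc' (by norm_num)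
    (continuousOn_logLamDeriv.mono (Icc_subset_Ioo (by norm_num) (by norm_num)))
    ⟨logLamDeriv_twentyone_twentyfifths_nonpos, logLamDeriv_five_sixths_nonneg⟩

lemma Lam_five_sixths_pow : Lam (5 / 6) ^ 6 = 5 ^ 12 / 11 ^ 11 := by
  rw [Lam, rpow_eq_pow, rpow_eq_pow, mul_pow, mul_pow, ← rpow_mul_natCast (by norm_num),
    ← rpow_mul_natCast (by norm_num)]
  norm_num

lemma Lam_five_sixths_gt : 0.308 < Lam (5 / 6) := by
  refine lt_of_pow_lt_pow_left₀ 6 ?_ ?_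
  · rw [Lam_eq_exp_logLam (by norm_num)]
    exact (exp_pos _).le
  · rw [Lam_five_sixths_pow]
    norm_num

lemma Lam_five_sixths_lt : Lam (5 / 6) < 0.3082 := by
  refine lt_of_pow_lt_pow_left₀ 6 (by norm_num) ?_
  rw [Lam_five_sixths_pow]
  norm_num

lemma Lam_le_of_logLamDeriv_eq_zero {t : ℝ} (ht : t ∈ Ioo (0 : ℝ) 1)
    (hcrit : logLamDeriv t = 0) : ∀ s ∈ Ioo (0 : ℝ) 1, Lam s ≤ Lam t := fun s hs => by
  have := concaveOn_logLam.le_add_mul_sub_of_hasDerivAt ht hs (hasDerivAt_logLam ht)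
  rw [hcrit, zero_mul, add_zero] at this
  rw [Lam_eq_exp_logLam hs, Lam_eq_exp_logLam ht]
  exact exp_le_exp.2 this

lemma Lam_lt_of_mem_Icc {t : ℝ} (ht : t ∈ Icc (5 / 6 : ℝ) (21 / 25)) : Lam t < 0.309 := by
  have h56 : (5 / 6 : ℝ) ∈ Ioo 0 1 := by norm_num
  have ht' : t ∈ Ioo (0 : ℝ) 1 := Icc_subset_Ioo (by norm_num) (by norm_num) ht
  have htangent := concaveOn_logLam.le_add_mul_sub_of_hasDerivAt h56 ht' (hasDerivAt_logLam h56)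
  have hgain : logLamDeriv (5 / 6) * (t - 5 / 6) ≤ 1 / 15000 := by
    nlinarith [logLamDeriv_five_sixths_nonneg, logLamDeriv_five_sixths_le, ht.1, ht.2]
  have hexp : exp (1 / 15000) < 15000 / 14999 := by
    have := exp_bound_div_one_sub_of_interval' (x := 1 / 15000) (by norm_num) (by norm_num)
    norm_num at this ⊢
    exact this
  calc Lam t = exp (logLam t) := Lam_eq_exp_logLam ht'
    _ ≤ exp (logLam (5 / 6) + 1 / 15000) := exp_le_exp.2 (by linarith)
    _ = Lam (5 / 6) * exp (1 / 15000) := by rw [exp_add, Lam_eq_exp_logLam h56]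
    _ < 0.3082 * (15000 / 14999) :=
        mul_lt_mul Lam_five_sixths_lt hexp.le (exp_pos _) (by norm_num)
    _ < 0.309 := by norm_num

theorem stmt13 :
    ∃ t ∈ Set.Ioo (0 : ℝ) 1,
      (∀ s ∈ Set.Ioo (0 : ℝ) 1, Lam s ≤ Lam t) ∧
      0.308 < Lam t ∧ Lam t < 0.309 := by
  obtain ⟨t, ht, hcrit⟩ := exists_logLamDeriv_eq_zero
  have ht' : t ∈ Ioo (0 : ℝ) 1 := Icc_subset_Ioo (by norm_num) (by norm_num) ht
  have hmax := Lam_le_of_logLamDeriv_eq_zero ht' hcrit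
  exact ⟨t, ht', hmax, Lam_five_sixths_gt.trans_le (hmax _ (by norm_num)), Lam_lt_of_mem_Icc ht⟩
end

section
/- Existence of sign pattern (Lemma eps): Let p ≥ 1, k ∈ [p], and ε_1,...,ε_p ∈ {0,1}. Then there exist numbers ε_{ij} ∈ {0,1} for i ∈ [k], j ∈ [p] such that: (i) ε_{ij} = ε_j for i ∈ [k] and j ∈ [p] \ [k]; (ii) ε_{ii} = ε_i for i ∈ [k]; (iii) ε_{ij} + ε_{ji} = 1 for all distinct i, j ∈ [k]; (iv) for each i ∈ [k], if ε_i = 1 then ε_{ij} ≤ ε_j for all j ∈ [k]; (v) for every nonempty subset J ⊆ [k] there exists i ∈ J with ε_{ij} = 1 for all j ∈ J \ {i}. -/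
theorem stmt16 (p k : ℕ) (hp : 1 ≤ p) (hk1 : 1 ≤ k) (hkp : k ≤ p)
    (ε : Fin p → ℕ) (hε : ∀ i, ε i ≤ 1) :
    ∃ E : Fin p → Fin p → ℕ,
      (∀ i j, E i j ≤ 1) ∧
      (∀ i j : Fin p, i.val < k → k ≤ j.val → E i j = ε j) ∧
      (∀ i : Fin p, i.val < k → E i i = ε i) ∧
      (∀ i j : Fin p, i.val < k → j.val < k → i ≠ j → E i j + E j i = 1) ∧
      (∀ i : Fin p, i.val < k → ε i = 1 → ∀ j : Fin p, j.val < k → E i j ≤ ε j) ∧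
      (∀ J : Finset (Fin p), J.Nonempty → (∀ j ∈ J, j.val < k) →
        ∃ i ∈ J, ∀ j ∈ J, j ≠ i → E i j = 1) := by
  refine ⟨fun i j => if k ≤ j.val then ε j else if i = j then ε i else
      if ε i = ε j then (if j.val < i.val then 1 else 0) else
      if ε i = 0 then 1 else 0, ?_, ?_, ?_, ?_, ?_, ?_⟩
  · intro i j
    dsimp only
    split_ifs <;> simp [hε]
  · intro i j hi hj
    simp [hj]
  · intro i hi
    simp [Nat.not_le.mpr hi]
  · intro i j hi hj hij
    have hij' : i.val ≠ j.val := fun h => hij (Fin.ext h)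
    simp only [Nat.not_le.mpr hi, Nat.not_le.mpr hj, if_false, hij, Ne.symm hij,
      if_false]
    by_cases h : ε i = ε j
    · simp only [h, if_true]
      rcases Nat.lt_or_ge j.val i.val with h2 | h2
      · simp [h2, Nat.not_lt.mpr (le_of_lt h2)]
      · have : i.val < j.val := lt_of_le_of_ne h2 hij'
        simp [this, Nat.not_lt.mpr (le_of_lt this)]
    · have h' : ε j ≠ ε i := fun hh => h hh.symm
      simp only [h, h', if_false]
      have := hε i; have := hε j
      interval_cases hi1 : ε i <;> interval_cases hj1 : ε j <;> simp_all
  · intro i hi hεi j hj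
    by_cases hij : i = j
    · subst hij; simp [Nat.not_le.mpr hi]
    · simp only [Nat.not_le.mpr hj, if_false, hij, if_false]
      by_cases h : ε i = ε j
      · rw [← h, hεi]; split_ifs <;> simp
      · rw [hεi] at h ⊢; simp [h]
  · intro J hJ hJk
    by_cases h0 : (J.filter (fun j => ε j = 0)).Nonempty
    · obtain ⟨i, hiJ0, hmax⟩ := Finset.exists_max_image _ (fun j : Fin p => j.val) h0
      rw [Finset.mem_filter] at hiJ0
      refine ⟨i, hiJ0.1, fun j hjJ hji => ?_⟩
      have hjk := hJk j hjJ
      simp only [Nat.not_le.mpr hjk, if_false, Ne.symm hji, if_false]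
      by_cases hj0 : ε j = 0
      · have hle := hmax j (Finset.mem_filter.mpr ⟨hjJ, hj0⟩)
        have : j.val < i.val := lt_of_le_of_ne hle (fun h => hji (Fin.ext h))
        simp [hiJ0.2, hj0, this]
      · simp [hiJ0.2, Ne.symm hj0]
    · obtain ⟨i, hiJ, hmax⟩ := Finset.exists_max_image _ (fun j : Fin p => j.val) hJ
      refine ⟨i, hiJ, fun j hjJ hji => ?_⟩
      have hjk := hJk j hjJ
      have hj1 : ε j ≠ 0 := fun hh => h0 ⟨j, Finset.mem_filter.mpr ⟨hjJ, hh⟩⟩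
      have hi1 : ε i ≠ 0 := fun hh => h0 ⟨i, Finset.mem_filter.mpr ⟨hiJ, hh⟩⟩
      have hj1' : ε j = 1 := le_antisymm (hε j) (Nat.one_le_iff_ne_zero.mpr hj1)
      have hi1' : ε i = 1 := le_antisymm (hε i) (Nat.one_le_iff_ne_zero.mpr hi1)
      have hle := hmax j hjJ
      have : j.val < i.val := lt_of_le_of_ne hle (fun h => hji (Fin.ext h))
      simp [Nat.not_le.mpr hjk, Ne.symm hji, hi1', hj1', this]
end

section
/- Half-open cone decomposition: Let a_1,...,a_p be a basis of ℝ^p, let ε_1,...,ε_p ∈ {0,1}, and define C := ∑_{i∈[p]} R^+_{ε_i} a_i, where R^+_0 = (0,∞) and R^+_1 = [0,∞). Let w = w_1 a_1 + ⋯ + w_p a_p with w_i > 0 for i ∈ [k] and w_i = 0 for i ∈ [p]\[k], where k ∈ [p]. Suppose ε_{ij} ∈ {0,1} (i ∈ [k], j ∈ [p]) satisfy conditions (i)–(v) of the sign-pattern lemma: ε_{ij}=ε_j for j ∉ [k]; ε_{ii}=ε_i; ε_{ij}+ε_{ji}=1 for distinct i,j ∈ [k]; ε_i=1 implies ε_{ij}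 ≤ ε_j for all j ∈ [k]; and every nonempty J ⊆ [k] contains some i with ε_{ij}=1 for all j ∈ J\{i}. Define C_i := R^+_{ε_{ii}} w + ∑_{j ≠ i} R^+_{ε_{ij}} a_j for i ∈ [k]. Then C is the disjoint union of C_1, ..., C_k; equivalently, the indicator functions satisfy 1_C = ∑_{i∈[k]} 1_{C_i}. -/
/-!
Write `s` for the coordinates of `x` with respect to `a` and put `ρ j = s j / w j` for `j < k`.
Exchanging `a i` for `w` in the basis shows that `x ∈ C_i` says: `ρ i ∈ R^+_{ε_i}`, the
coordinates `s j` with `j ≥ k` satisfy the same conditions as for `C`, and `i` minimises `ρ` on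
`[k]`, a tie with `j` being allowed only when `ε_{ij} = 1`. Condition (v), applied to the set of
all minimisers, produces such an `i` for every `x ∈ C`; condition (iii) makes it unique; and
condition (iv) shows that every `C_i` lies in `C`.
-/

/-- `R^+_0 = (0,∞)`, `R^+_1 = [0,∞)`. -/
def Rplus (e : ℕ) : Set ℝ := if e = 1 then Set.Ici 0 else Set.Ioi 0

open Finset Function

section Rplus

variable {e : ℕ} {x c : ℝ}

lemma mem_Rplus_iff : x ∈ Rplus e ↔ 0 ≤ x ∧ (e ≠ 1 → 0 < x) := by
  unfold Rplus
  split_ifs with he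
  · simp [he]
  · simpa [he] using fun h : 0 < x => h.le

lemma zero_mem_Rplus_one : (0 : ℝ) ∈ Rplus 1 := by
  simp [mem_Rplus_iff]

lemma mem_Rplus_of_pos (hx : 0 < x) : x ∈ Rplus e :=
  mem_Rplus_iff.2 ⟨hx.le, fun _ => hx⟩

lemma mul_mem_Rplus_iff (hc : 0 < c) : c * x ∈ Rplus e ↔ x ∈ Rplus e := by
  simp only [mem_Rplus_iff, mul_nonneg_iff_of_pos_left hc, mul_pos_iff_of_pos_left hc]

lemma div_mem_Rplus_iff (hc : 0 < c) : x / c ∈ Rplus e ↔ x ∈ Rplus e := by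
  rw [div_eq_inv_mul, mul_mem_Rplus_iff (inv_pos.2 hc)]

end Rplus

section HalfOpenMin

variable {ι : Type*} {K : Set ι} {ε : ι → ℕ} {E : ι → ι → ℕ} {ρ : ι → ℝ} {i j : ι}

/-- `i` minimises `ρ` on `K`, where a tie with `j` is allowed only if `E i j = 1`. -/
def IsHalfOpenMin (K : Set ι) (E : ι → ι → ℕ) (ρ : ι → ℝ) (i : ι) : Prop :=
  ∀ j ∈ K, j ≠ i → ρ j - ρ i ∈ Rplus (E i j)

lemma exists_isHalfOpenMin (hK : K.Finite) (hKne : K.Nonempty)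
    (h5 : ∀ J : Finset ι, J.Nonempty → (∀ j ∈ J, j ∈ K) → ∃ i ∈ J, ∀ j ∈ J, j ≠ i → E i j = 1)
    (ρ : ι → ℝ) : ∃ i ∈ K, IsHalfOpenMin K E ρ i := by
  obtain ⟨m, hmK, hm⟩ := K.exists_min_image ρ hK hKne
  let J := (hK.subset (Set.inter_subset_left (t := {j | ρ j = ρ m}))).toFinset
  obtain ⟨i, hiJ, hiE⟩ := h5 J ⟨m, by simp [J, hmK]⟩ fun j hj => by simp_all [J]
  simp only [J, Set.Finite.mem_toFinset, Set.mem_inter_iff, Set.mem_ofPred_eq] at hiJ hiE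
  refine ⟨i, hiJ.1, fun j hj hji => ?_⟩
  rcases (hm j hj).eq_or_lt with h | h
  · rw [hiE j ⟨hj, h.symm⟩ hji, hiJ.2, h, sub_self]
    exact zero_mem_Rplus_one
  · exact mem_Rplus_of_pos (by linarith)

lemma IsHalfOpenMin.eq (h3 : ∀ i j, i ∈ K → j ∈ K → i ≠ j → E i j + E j i = 1)
    (hi : i ∈ K) (hj : j ∈ K) (hmi : IsHalfOpenMin K E ρ i) (hmj : IsHalfOpenMin K E ρ j) :
    i = j := by
  by_contra hij
  have hij' := mem_Rplus_iff.1 (hmi j hj (Ne.symm hij))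
  have hji' := mem_Rplus_iff.1 (hmj i hi hij)
  have : E i j ≠ 1 ∨ E j i ≠ 1 := by have := h3 i j hi hj hij; omega
  rcases this with h | h
  · linarith [hij'.2 h, hji'.1]
  · linarith [hij'.1, hji'.2 h]

lemma IsHalfOpenMin.mem_Rplus (hε : ∀ j, ε j ≤ 1) (h4 : ε i = 1 → ∀ j ∈ K, E i j ≤ ε j)
    (hmi : IsHalfOpenMin K E ρ i) (hρi : ρ i ∈ Rplus (ε i)) (hj : j ∈ K) :
    ρ j ∈ Rplus (ε j) := by
  obtain rfl | hji := eq_or_ne j i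
  · exact hρi
  rw [mem_Rplus_iff] at hρi ⊢
  have hd := mem_Rplus_iff.1 (hmi j hj hji)
  refine ⟨by linarith [hρi.1, hd.1], fun hεj => ?_⟩
  by_cases hεi : ε i = 1
  · have hEij : E i j ≠ 1 := fun h => hεj (le_antisymm (hε j) (h ▸ h4 hεi j hj))
    linarith [hρi.1, hd.2 hEij]
  · linarith [hρi.2 hεi, hd.1]

end HalfOpenMin

section Exchange

variable {ι R 𝕜 V : Type*}

lemma Module.Basis.eq_sum_smul_iff [Fintype ι] [Semiring R] [AddCommMonoid V] [Module R V]
    (b : Module.Basis ι R V) {x : V} {c : ι → R} : x = ∑ i, c i • b i ↔ ⇑(b.repr x) = c := by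
  rw [← b.equivFun_symm_apply, LinearEquiv.eq_symm_apply, b.equivFun_apply]

lemma Module.Basis.exists_and_eq_sum_smul_iff [Fintype ι] [Semiring R] [AddCommMonoid V]
    [Module R V] (b : Module.Basis ι R V) (P : (ι → R) → Prop) (x : V) :
    (∃ t, P t ∧ x = ∑ i, t i • b i) ↔ P (b.repr x) := by
  simp only [b.eq_sum_smul_iff, exists_eq_right']

lemma sum_smul_add_update_zero_smul [Fintype ι] [DecidableEq ι] [CommSemiring R]
    [AddCommMonoid V] [Module R V] (v : ι → V) (w t : ι → R) (i : ι) :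
    ∑ j, (t i • w + update t i 0) j • v j =
      t i • ∑ j, w j • v j + ∑ j ∈ univ.erase i, t j • v j := by
  simp only [Pi.add_apply, Pi.smul_apply, smul_eq_mul, add_smul, sum_add_distrib, smul_sum,
    mul_smul]
  congr 1
  rw [← add_sum_erase _ _ (mem_univ i), update_self, zero_smul, zero_add]
  exact sum_congr rfl fun j hj => by rw [update_of_ne (ne_of_mem_erase hj)]

lemma smul_add_update_zero_eq_iff [DecidableEq ι] [Field 𝕜] {w s t : ι → 𝕜} {i : ι}
    (hwi : w i ≠ 0) :
    t i • w + update t i 0 = s ↔ t = update (s - (s i / w i) • w) i (s i / w i) := by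
  constructor
  · rintro rfl
    ext j
    obtain rfl | hji := eq_or_ne j i <;> simp_all
  · rintro rfl
    ext j
    obtain rfl | hji := eq_or_ne j i <;> simp_all

lemma Module.Basis.exists_smul_add_sum_erase_iff [Fintype ι] [DecidableEq ι] [Field 𝕜]
    [AddCommGroup V] [Module 𝕜 V] (b : Module.Basis ι 𝕜 V) {w : ι → 𝕜} {i : ι} (hwi : w i ≠ 0)
    (P : ι → 𝕜 → Prop) (x : V) :
    (∃ t : ι → 𝕜, P i (t i) ∧ (∀ j ≠ i, P j (t j)) ∧
        x = t i • ∑ j, w j • b j + ∑ j ∈ univ.erase i, t j • b j) ↔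
      P i (b.repr x i / w i) ∧ ∀ j ≠ i, P j (b.repr x j - b.repr x i / w i * w j) := by
  simp only [← sum_smul_add_update_zero_smul, b.eq_sum_smul_iff, eq_comm (a := ⇑(b.repr x)),
    smul_add_update_zero_eq_iff hwi, ← and_assoc, exists_eq_right, update_self]
  refine and_congr_right fun _ => forall₂_congr fun j hj => ?_
  rw [update_of_ne hj, Pi.sub_apply, Pi.smul_apply, smul_eq_mul]

end Exchange

section Cells

variable {ι : Type*} {K : Set ι} {w s : ι → ℝ} {ε : ι → ℕ} {E : ι → ι → ℕ} {i : ι}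

/-- `s i / w i` and `s j - s i / w i * w j` are the coordinates of `∑ j, s j • a j` in the basis
obtained from `a` by exchanging `a i` for `∑ j, w j • a j`. -/
def InExchangedCone (E : ι → ι → ℕ) (w s : ι → ℝ) (i : ι) : Prop :=
  s i / w i ∈ Rplus (E i i) ∧ ∀ j ≠ i, s j - s i / w i * w j ∈ Rplus (E i j)

lemma forall_mem_Rplus_iff_of_pos (hwK : ∀ j ∈ K, 0 < w j) :
    (∀ j, s j ∈ Rplus (ε j)) ↔
      (∀ j ∈ K, s j / w j ∈ Rplus (ε j)) ∧ ∀ j ∉ K, s j ∈ Rplus (ε j) := by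
  refine ⟨fun h => ⟨fun j hj => (div_mem_Rplus_iff (hwK j hj)).2 (h j), fun j _ => h j⟩,
    fun h j => ?_⟩
  by_cases hj : j ∈ K
  · exact (div_mem_Rplus_iff (hwK j hj)).1 (h.1 j hj)
  · exact h.2 j hj

lemma inExchangedCone_iff (hwK : ∀ j ∈ K, 0 < w j) (hw0 : ∀ j ∉ K, w j = 0) (hi : i ∈ K)
    (h1 : ∀ j ∉ K, E i j = ε j) (h2 : E i i = ε i) :
    InExchangedCone E w s i ↔
      (s i / w i ∈ Rplus (ε i) ∧ IsHalfOpenMin K E (fun j => s j / w j) i) ∧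
        ∀ j ∉ K, s j ∈ Rplus (ε j) := by
  have inside : ∀ j ∈ K, s j - s i / w i * w j = w j * (s j / w j - s i / w i) := by
    intro j hj
    field_simp [(hwK j hj).ne']
  rw [InExchangedCone, h2, and_assoc]
  refine and_congr_right fun _ => ⟨fun h => ⟨fun j hj hji => ?_, fun j hj => ?_⟩, fun h j hji => ?_⟩
  · rw [← mul_mem_Rplus_iff (hwK j hj), ← inside j hj]
    exact h j hji
  · simpa [hw0 j hj, h1 j hj] using h j (ne_of_mem_of_not_mem hi hj).symm
  · by_cases hj : j ∈ K
    · rw [inside j hj, mul_mem_Rplus_iff (hwK j hj)]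
      exact h.1 j hj hji
    · simpa [hw0 j hj, h1 j hj] using h.2 j hj

theorem forall_mem_Rplus_iff_exists_inExchangedCone (hwK : ∀ j ∈ K, 0 < w j)
    (hw0 : ∀ j ∉ K, w j = 0) (h1 : ∀ i ∈ K, ∀ j ∉ K, E i j = ε j) (h2 : ∀ i ∈ K, E i i = ε i)
    (hK : K.Finite) (hKne : K.Nonempty) (hε : ∀ j, ε j ≤ 1)
    (h4 : ∀ i, i ∈ K → ε i = 1 → ∀ j, j ∈ K → E i j ≤ ε j)
    (h5 : ∀ J : Finset ι, J.Nonempty → (∀ j ∈ J, j ∈ K) → ∃ i ∈ J, ∀ j ∈ J, j ≠ i → E i j = 1) :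
    (∀ j, s j ∈ Rplus (ε j)) ↔ ∃ i ∈ K, InExchangedCone E w s i := by
  rw [forall_mem_Rplus_iff_of_pos hwK]
  constructor
  · rintro ⟨hin, hout⟩
    obtain ⟨i, hi, hmin⟩ := exists_isHalfOpenMin hK hKne h5 fun j => s j / w j
    exact ⟨i, hi, (inExchangedCone_iff hwK hw0 hi (h1 i hi) (h2 i hi)).2 ⟨⟨hin i hi, hmin⟩, hout⟩⟩
  · rintro ⟨i, hi, hcell⟩
    obtain ⟨⟨hρi, hmin⟩, hout⟩ := (inExchangedCone_iff hwK hw0 hi (h1 i hi) (h2 i hi)).1 hcell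
    exact ⟨fun j hj => hmin.mem_Rplus hε (h4 i hi) hρi hj, hout⟩

theorem InExchangedCone.eq {j : ι} (hwK : ∀ j ∈ K, 0 < w j) (hw0 : ∀ j ∉ K, w j = 0)
    (h1 : ∀ i ∈ K, ∀ j ∉ K, E i j = ε j) (h2 : ∀ i ∈ K, E i i = ε i)
    (h3 : ∀ i j, i ∈ K → j ∈ K → i ≠ j → E i j + E j i = 1)
    (hi : i ∈ K) (hj : j ∈ K) (hci : InExchangedCone E w s i) (hcj : InExchangedCone E w s j) :
    i = j :=
  ((inExchangedCone_iff hwK hw0 hi (h1 i hi) (h2 i hi)).1 hci).1.2.eq h3 hi hj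
    ((inExchangedCone_iff hwK hw0 hj (h1 j hj) (h2 j hj)).1 hcj).1.2

end Cells

theorem stmt17_general (p k : ℕ) (hk1 : 1 ≤ k) (hkp : k ≤ p)
    (a : Fin p → (Fin p → ℝ)) (hli : LinearIndependent ℝ a)
    (hspan : Submodule.span ℝ (Set.range a) = ⊤)
    (ε : Fin p → ℕ) (hε : ∀ i, ε i ≤ 1)
    (w : Fin p → ℝ)
    (hw : ∀ i : Fin p, (i.val < k → 0 < w i) ∧ (k ≤ i.val → w i = 0))
    (E : Fin p → Fin p → ℕ)
    (h1 : ∀ i j : Fin p, i.val < k → k ≤ j.val → E i j = ε j)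
    (h2 : ∀ i : Fin p, i.val < k → E i i = ε i)
    (h3 : ∀ i j : Fin p, i.val < k → j.val < k → i ≠ j → E i j + E j i = 1)
    (h4 : ∀ i : Fin p, i.val < k → ε i = 1 → ∀ j : Fin p, j.val < k → E i j ≤ ε j)
    (h5 : ∀ J : Finset (Fin p), J.Nonempty → (∀ j ∈ J, j.val < k) →
      ∃ i ∈ J, ∀ j ∈ J, j ≠ i → E i j = 1)
    (wv : Fin p → ℝ) (hwv : wv = ∑ i, w i • a i)
    (C : Set (Fin p → ℝ))
    (hC : C = {x | ∃ t : Fin p → ℝ, (∀ i, t i ∈ Rplus (ε i)) ∧ x = ∑ i, t i • a i})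
    (Ci : Fin p → Set (Fin p → ℝ))
    (hCi : ∀ i : Fin p, Ci i =
      {x | ∃ t : Fin p → ℝ, t i ∈ Rplus (E i i) ∧
        (∀ jj : Fin p, jj ≠ i → t jj ∈ Rplus (E i jj)) ∧
        x = t i • wv + ∑ jj ∈ Finset.univ.erase i, t jj • a jj}) :
    (∀ x, x ∈ C ↔ ∃ i : Fin p, i.val < k ∧ x ∈ Ci i) ∧
    (∀ i j : Fin p, i.val < k → j.val < k → i ≠ j → Disjoint (Ci i) (Ci j)) := by
  obtain ⟨b, rfl⟩ : ∃ b : Module.Basis (Fin p) ℝ (Fin p → ℝ), ⇑b = a :=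
    ⟨.mk hli hspan.ge, Module.Basis.coe_mk _ _⟩
  subst hwv hC
  let K : Set (Fin p) := {i | i.val < k}
  have hwK : ∀ j ∈ K, 0 < w j := fun j hj => (hw j).1 hj
  have hw0 : ∀ j ∉ K, w j = 0 := fun j hj => (hw j).2 (not_lt.1 hj)
  have h1' : ∀ i ∈ K, ∀ j ∉ K, E i j = ε j := fun i hi j hj => h1 i j hi (not_lt.1 hj)
  have mem_Ci : ∀ x, ∀ i ∈ K, x ∈ Ci i ↔ InExchangedCone E w (b.repr x) i := fun x i hi => by
    rw [hCi]
    exact b.exists_smul_add_sum_erase_iff (hwK i hi).ne' (fun j r => r ∈ Rplus (E i j)) x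
  refine ⟨fun x => ?_, fun i j hi hj hij => Set.disjoint_left.2 fun x hxi hxj => hij ?_⟩
  · rw [Set.mem_ofPred_eq, b.exists_and_eq_sum_smul_iff (fun t => ∀ j, t j ∈ Rplus (ε j)),
      forall_mem_Rplus_iff_exists_inExchangedCone hwK hw0 h1' h2 K.toFinite
        ⟨⟨0, by omega⟩, hk1⟩ hε h4 h5]
    exact exists_congr fun i => and_congr_right fun hi => (mem_Ci x i hi).symm
  · exact InExchangedCone.eq hwK hw0 h1' h2 h3 hi hj ((mem_Ci x i hi).1 hxi) ((mem_Ci x j hj).1 hxj)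

theorem stmt17 (p k : ℕ) (hp : 1 ≤ p) (hk1 : 1 ≤ k) (hkp : k ≤ p)
    (a : Fin p → (Fin p → ℝ)) (hli : LinearIndependent ℝ a)
    (hspan : Submodule.span ℝ (Set.range a) = ⊤)
    (ε : Fin p → ℕ) (hε : ∀ i, ε i ≤ 1)
    (w : Fin p → ℝ)
    (hw : ∀ i : Fin p, (i.val < k → 0 < w i) ∧ (k ≤ i.val → w i = 0))
    (E : Fin p → Fin p → ℕ) (hE01 : ∀ i j, E i j ≤ 1)
    (h1 : ∀ i j : Fin p, i.val < k → k ≤ j.val → E i j = ε j)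
    (h2 : ∀ i : Fin p, i.val < k → E i i = ε i)
    (h3 : ∀ i j : Fin p, i.val < k → j.val < k → i ≠ j → E i j + E j i = 1)
    (h4 : ∀ i : Fin p, i.val < k → ε i = 1 → ∀ j : Fin p, j.val < k → E i j ≤ ε j)
    (h5 : ∀ J : Finset (Fin p), J.Nonempty → (∀ j ∈ J, j.val < k) →
      ∃ i ∈ J, ∀ j ∈ J, j ≠ i → E i j = 1)
    (wv : Fin p → ℝ) (hwv : wv = ∑ i, w i • a i)
    (C : Set (Fin p → ℝ))
    (hC : C = {x | ∃ t : Fin p → ℝ, (∀ i, t i ∈ Rplus (ε i)) ∧ x = ∑ i, t i • a i})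
    (Ci : Fin p → Set (Fin p → ℝ))
    (hCi : ∀ i : Fin p, Ci i =
      {x | ∃ t : Fin p → ℝ, t i ∈ Rplus (E i i) ∧
        (∀ jj : Fin p, jj ≠ i → t jj ∈ Rplus (E i jj)) ∧
        x = t i • wv + ∑ jj ∈ Finset.univ.erase i, t jj • a jj}) :
    (∀ x, x ∈ C ↔ ∃ i : Fin p, i.val < k ∧ x ∈ Ci i) ∧
    (∀ i j : Fin p, i.val < k → j.val < k → i ≠ j → Disjoint (Ci i) (Ci j)) :=
  stmt17_general p k hk1 hkp a hli hspan ε hε w hw E h1 h2 h3 h4 h5 wv hwv C hC Ci hCi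
end

section
/- Unimodular decomposition of half-open simplicial cones: Let A be a nonsingular p × p integer matrix and J ⊆ [p]. Define R^+_J := ∏_{j∈[p]} R^+_{ε(j)} with ε(j) = 1 if j ∈ J and 0 otherwise, where R^+_0 = (0,∞), R^+_1 = [0,∞). Then there exist a finite set I, unimodular p × p integer matrices A_i (i.e., det A_i = ±1) for i ∈ I, and subsets J_i ⊆ [p], such that the indicator of the half-open cone A R^+_J decomposes as 1_{A R^+_J} = ∑_{i ∈ I} 1_{A_i R^+_{J_i}} pointwise on ℝ^p. -/
/-- The half-open orthant `R^+_J = ∏_j R^+_{ε(j)}` with `R^+_1 = [0,∞)`, `R^+_0 = (0,∞)`. -/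
def RplusJ (p : ℕ) (J : Finset (Fin p)) : Set (Fin p → ℝ) :=
  {x | ∀ r, if r ∈ J then 0 ≤ x r else 0 < x r}

/-- The half-open simplicial cone `A R^+_J`. -/
def coneOf {p : ℕ} (A : Matrix (Fin p) (Fin p) ℤ) (J : Finset (Fin p)) :
    Set (Fin p → ℝ) :=
  (fun x => (A.map (Int.cast : ℤ → ℝ)).mulVec x) '' RplusJ p J

/-!
Induction on `|det A|`. If `|det A| ≥ 2`, then `A` does not map `ℤᵖ` onto itself, so some
nonzero lattice point `w = A μ` has `0 ≤ μ < 1`. Replacing the `k`-th column of `A` by `w`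
multiplies the determinant by `μ k`. In the coordinates `t = A⁻¹ x`, the orthant `R^+_J` is the
disjoint union, over the `k` with `μ k > 0`, of the cones spanned by `μ` and the `e_r`, `r ≠ k`:
the point `t` lies in the `k`-th one when `k` minimises `t k / μ k`, and a suitable choice of
open and closed facets makes this choice unique.
-/

namespace HalfOpenCone

open Matrix Finset

section Orthant

variable {p : ℕ} {J : Finset (Fin p)} {μ s t : Fin p → ℝ} {k r : Fin p}

lemma mem_RplusJ_iff {x : Fin p → ℝ} : x ∈ RplusJ p J ↔ ∀ r, 0 ≤ x r ∧ (r ∉ J → 0 < x r) := by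
  refine forall_congr' fun r => ?_
  split_ifs with hr
  · simp [hr]
  · simpa [hr] using le_of_lt

/-- Coordinates outside `J` come first; the order breaks ties between the ratios `t r / μ r`. -/
def tieKey (J : Finset (Fin p)) (r : Fin p) : ℕ :=
  (if r ∈ J then p else 0) + r

lemma tieKey_injective : Function.Injective (tieKey J) := by
  intro a b hab
  have := a.isLt
  have := b.isLt
  by_cases ha : a ∈ J <;> by_cases hb : b ∈ J <;>
    simp only [tieKey, ha, hb, if_true, if_false] at hab <;> exact Fin.ext (by omega)

lemma notMem_of_tieKey_lt (h : tieKey J k < tieKey J r) (hr : r ∉ J) : k ∉ J := by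
  intro hk
  have := r.isLt
  simp only [tieKey, hk, hr, if_true, if_false] at h
  omega

/-- In the coordinates `s` of the cone whose `k`-th generator `e_k` is replaced by
`μ = ∑ μ_r e_r`, the point `∑_{r ≠ k} s_r e_r + s_k μ`. -/
def exchange (μ : Fin p → ℝ) (k : Fin p) (s : Fin p → ℝ) : Fin p → ℝ :=
  Function.update s k 0 + s k • μ

@[simp]
lemma exchange_apply_self : exchange μ k s k = μ k * s k := by
  simp [exchange, mul_comm]

@[simp]
lemma exchange_apply_of_ne (h : r ≠ k) : exchange μ k s r = s r + μ r * s k := by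
  simp [exchange, h, mul_comm]

noncomputable def subconeClosed (J : Finset (Fin p)) (μ : Fin p → ℝ) (k : Fin p) :
    Finset (Fin p) :=
  {r | if r = k then k ∈ J else if 0 < μ r then tieKey J k < tieKey J r else r ∈ J}

@[simp]
lemma mem_subconeClosed_self : k ∈ subconeClosed J μ k ↔ k ∈ J := by
  simp [subconeClosed]

lemma mem_subconeClosed_of_pos (h : r ≠ k) (hr : 0 < μ r) :
    r ∈ subconeClosed J μ k ↔ tieKey J k < tieKey J r := by
  simp [subconeClosed, h, hr]

lemma mem_subconeClosed_of_nonpos (h : r ≠ k) (hr : ¬0 < μ r) :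
    r ∈ subconeClosed J μ k ↔ r ∈ J := by
  simp [subconeClosed, h, hr]

lemma exchange_mem_RplusJ (hμ : 0 ≤ μ) (hk : 0 < μ k)
    (hs : s ∈ RplusJ p (subconeClosed J μ k)) : exchange μ k s ∈ RplusJ p J := by
  rw [mem_RplusJ_iff] at hs ⊢
  have hs0 : ∀ r, 0 ≤ s r := fun r => (hs r).1
  intro r
  refine ⟨?_, fun hrJ => ?_⟩
  · have hupd : 0 ≤ Function.update s k 0 r := by
      rw [Function.update_apply]; split_ifs; exacts [le_rfl, hs0 r]
    exact add_nonneg hupd (mul_nonneg (hs0 k) (hμ r))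
  rcases eq_or_ne r k with rfl | hrk
  · exact exchange_apply_self ▸ mul_pos hk ((hs r).2 (by simpa using hrJ))
  rw [exchange_apply_of_ne hrk]
  by_cases hμr : 0 < μ r
  · by_cases hkr : tieKey J k < tieKey J r
    · have hsk := (hs k).2 (by simpa using notMem_of_tieKey_lt hkr hrJ)
      nlinarith [hs0 r]
    · have hsr := (hs r).2 (by rwa [mem_subconeClosed_of_pos hrk hμr])
      nlinarith [hs0 k]
  · have hsr := (hs r).2 (by rwa [mem_subconeClosed_of_nonpos hrk hμr])
    rw [le_antisymm (not_lt.1 hμr) (hμ r)]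
    simpa using hsr

lemma exists_mem_image_exchange (hμ : 0 < μ) (ht : t ∈ RplusJ p J) :
    ∃ k, 0 < μ k ∧ t ∈ exchange μ k '' RplusJ p (subconeClosed J μ k) := by
  obtain ⟨hμ0, k₀, hk₀⟩ := Pi.lt_def.1 hμ
  obtain ⟨k, hk, hmin⟩ := exists_min_image {r | 0 < μ r}
    (fun r => toLex (t r / μ r, tieKey J r)) ⟨k₀, by simpa using hk₀⟩
  rw [mem_filter_univ] at hk
  rw [mem_RplusJ_iff] at ht
  set m := t k / μ k
  have hmr : ∀ r ≠ k, 0 < μ r →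
      μ r * m ≤ t r ∧ (r ∉ subconeClosed J μ k → μ r * m < t r) := by
    intro r hrk hμr
    have h := Prod.Lex.le_iff.1 (hmin r (by simpa using hμr))
    simp only [ofLex_toLex] at h
    rw [mem_subconeClosed_of_pos hrk hμr, ← mul_comm, ← le_div_iff₀ hμr, ← lt_div_iff₀ hμr]
    refine ⟨h.elim le_of_lt fun h => h.1.le, fun hkr => h.resolve_right fun h' => hkr ?_⟩
    exact lt_of_le_of_ne h'.2 (tieKey_injective.ne (Ne.symm hrk))
  refine ⟨k, hk, Function.update (t - m • μ) k m, mem_RplusJ_iff.2 fun r => ?_, ?_⟩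
  · rcases eq_or_ne r k with rfl | hrk
    · simp only [Function.update_self, mem_subconeClosed_self]
      exact ⟨div_nonneg (ht r).1 hk.le, fun hrJ => div_pos ((ht r).2 hrJ) hk⟩
    simp only [Function.update_of_ne hrk, Pi.sub_apply, Pi.smul_apply, smul_eq_mul, sub_nonneg,
      sub_pos, mul_comm m]
    by_cases hμr : 0 < μ r
    · exact hmr r hrk hμr
    · rw [le_antisymm (not_lt.1 hμr) (hμ0 r), zero_mul, mem_subconeClosed_of_nonpos hrk hμr]
      exact ht r
  · ext r
    rcases eq_or_ne r k with rfl | hrk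
    · simp [m, mul_div_cancel₀ _ hk.ne']
    · simp [hrk]
      ring

lemma exchange_ne_of_tieKey_lt {k' : Fin p} {s' : Fin p → ℝ} (hk : 0 < μ k)
    (hk' : 0 < μ k') (hkk' : tieKey J k < tieKey J k')
    (hs : s ∈ RplusJ p (subconeClosed J μ k)) (hs' : s' ∈ RplusJ p (subconeClosed J μ k')) :
    exchange μ k s ≠ exchange μ k' s' := by
  have hne : k ≠ k' := fun h => hkk'.ne (congrArg _ h)
  intro heq
  have h₁ := congrFun heq k
  have h₂ := congrFun heq k'
  rw [exchange_apply_self, exchange_apply_of_ne hne] at h₁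
  rw [exchange_apply_self, exchange_apply_of_ne hne.symm] at h₂
  rw [mem_RplusJ_iff] at hs hs'
  have hsk' := (hs k').1
  have hs'k := (hs' k).2 (by rw [mem_subconeClosed_of_pos hne hk]; omega)
  nlinarith [(hs k).1, (hs' k').1]

lemma pairwiseDisjoint_image_exchange :
    (({k | 0 < μ k} : Finset (Fin p)) : Set (Fin p)).PairwiseDisjoint
      fun k => exchange μ k '' RplusJ p (subconeClosed J μ k) := by
  intro k hk k' hk' hne
  simp only [coe_filter, mem_univ, true_and, Set.mem_ofPred_eq] at hk hk'
  rw [Function.onFun, Set.disjoint_left]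
  rintro _ ⟨s, hs, rfl⟩ ⟨s', hs', heq⟩
  rcases lt_or_gt_of_ne (tieKey_injective.ne hne) with h | h
  · exact exchange_ne_of_tieKey_lt hk hk' h hs hs' heq.symm
  · exact exchange_ne_of_tieKey_lt hk' hk h hs' hs heq

lemma RplusJ_eq_biUnion_image_exchange (hμ : 0 < μ) :
    RplusJ p J = ⋃ k ∈ ({k | 0 < μ k} : Finset (Fin p)),
      exchange μ k '' RplusJ p (subconeClosed J μ k) := by
  ext t
  simp only [Set.mem_iUnion, mem_filter_univ, exists_prop]
  refine ⟨exists_mem_image_exchange hμ, ?_⟩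
  rintro ⟨k, hk, s, hs, rfl⟩
  exact exchange_mem_RplusJ hμ.le hk hs

end Orthant

section LinearAlgebra

variable {n R : Type*} [Fintype n] [DecidableEq n] [CommRing R]

lemma updateCol_mulVec (M : Matrix n n R) (k : n) (v s : n → R) :
    M.updateCol k v *ᵥ s = M *ᵥ Function.update s k 0 + s k • v := by
  ext i
  simp only [mulVec, dotProduct, updateCol_apply, Function.update_apply, Pi.add_apply,
    Pi.smul_apply, smul_eq_mul]
  simp [ite_mul, mul_ite, sum_ite, filter_ne', filter_eq']
  ring

lemma det_updateCol_mulVec (M : Matrix n n R) (k : n) (μ : n → R) :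
    (M.updateCol k (M *ᵥ μ)).det = μ k * M.det := by
  rw [← smul_eq_mul, ← det_updateCol_sum]
  congr
  ext i
  simp [mulVec, dotProduct, mul_comm]

/-- Witness: `μ` is the fractional part of `A⁻¹ u` for an integer vector `u ∉ A ℤⁿ`. -/
lemma exists_intCast_mem_parallelepiped (A : Matrix n n ℤ) (hA : A.det ≠ 0)
    (hA1 : A.det.natAbs ≠ 1) :
    ∃ (μ : n → ℝ) (w : n → ℤ), A.map (Int.cast : ℤ → ℝ) *ᵥ μ = Int.cast ∘ w ∧ 0 < μ ∧
      ∀ r, μ r < 1 := by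
  set T := A.map (Int.cast : ℤ → ℝ)
  obtain ⟨u, hu⟩ : ∃ u, ∀ c, A *ᵥ c ≠ u := by
    have : ¬Function.Surjective A.mulVec := by
      rwa [mulVec_surjective_iff_isUnit, isUnit_iff_isUnit_det, Int.isUnit_iff_natAbs_eq]
    simpa [Function.Surjective] using this
  have hT : IsUnit T.det := by
    rw [← Int.cast_det]
    exact isUnit_iff_ne_zero.2 (Int.cast_ne_zero.2 hA)
  set t := T⁻¹ *ᵥ (Int.cast ∘ u)
  have hTt : T *ᵥ t = Int.cast ∘ u := by
    rw [mulVec_mulVec, mul_nonsing_inv T hT, one_mulVec]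
  have hT_intCast : ∀ c : n → ℤ, T *ᵥ (Int.cast ∘ c) = Int.cast ∘ (A *ᵥ c) := fun c =>
    funext fun i => (RingHom.map_mulVec (Int.castRingHom ℝ) A c i).symm
  have hfract : Int.fract ∘ t = t - Int.cast ∘ (Int.floor ∘ t) := rfl
  refine ⟨Int.fract ∘ t, u - A *ᵥ (Int.floor ∘ t), ?_, ?_, fun r => Int.fract_lt_one _⟩
  · rw [hfract, mulVec_sub, hTt, hT_intCast]
    ext i
    simp
  refine Pi.lt_def.2 ⟨fun r => Int.fract_nonneg _, ?_⟩
  by_contra! h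
  have ht : t = Int.cast ∘ (Int.floor ∘ t) := by
    rw [← sub_eq_zero, ← hfract]
    exact funext fun r => le_antisymm (h r) (Int.fract_nonneg _)
  apply hu (Int.floor ∘ t)
  have := hT_intCast (Int.floor ∘ t)
  rw [← ht, hTt] at this
  exact funext fun i => Int.cast_injective (congrFun this i).symm

end LinearAlgebra

section Cone

variable {p : ℕ} {A : Matrix (Fin p) (Fin p) ℤ} {w : Fin p → ℤ} {μ : Fin p → ℝ}

lemma coneOf_updateCol (hw : A.map (Int.cast : ℤ → ℝ) *ᵥ μ = Int.cast ∘ w) (k : Fin p)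
    (J : Finset (Fin p)) :
    coneOf (A.updateCol k w) J =
      (A.map (Int.cast : ℤ → ℝ) *ᵥ ·) '' (exchange μ k '' RplusJ p J) := by
  rw [← Set.image_comp]
  refine congrArg (· '' RplusJ p J) (funext fun s => ?_)
  simp [map_updateCol, updateCol_mulVec, exchange, mulVec_add, mulVec_smul, hw]

lemma natAbs_det_updateCol_lt (hw : A.map (Int.cast : ℤ → ℝ) *ᵥ μ = Int.cast ∘ w) {k : Fin p}
    (hk : 0 < μ k) (hk1 : μ k < 1) (hA : A.det ≠ 0) :
    (A.updateCol k w).det ≠ 0 ∧ (A.updateCol k w).det.natAbs < A.det.natAbs := by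
  have hdet : ((A.updateCol k w).det : ℝ) = μ k * A.det := by
    rw [Int.cast_det, Int.cast_det, map_updateCol, ← hw]
    exact det_updateCol_mulVec _ k μ
  have hA' : (0 : ℝ) < |(A.det : ℝ)| := abs_pos.2 (Int.cast_ne_zero.2 hA)
  refine ⟨fun h => ?_, ?_⟩
  · rw [h, Int.cast_zero, zero_eq_mul] at hdet
    exact hA'.ne' (by simp [hdet.resolve_left hk.ne'])
  · rw [← Nat.cast_lt (α := ℝ), Nat.cast_natAbs, Nat.cast_natAbs, Int.cast_abs, Int.cast_abs,
      hdet, abs_mul, abs_of_pos hk]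
    exact mul_lt_of_lt_one_left hA' hk1

lemma indicator_coneOf_eq_sum (hA : A.det ≠ 0)
    (hw : A.map (Int.cast : ℤ → ℝ) *ᵥ μ = Int.cast ∘ w) (hμ : 0 < μ) (J : Finset (Fin p)) :
    (coneOf A J).indicator (fun _ => (1 : ℝ)) =
      ∑ k ∈ ({k | 0 < μ k} : Finset (Fin p)),
        (coneOf (A.updateCol k w) (subconeClosed J μ k)).indicator fun _ => 1 := by
  have hT : Function.Injective (A.map (Int.cast : ℤ → ℝ) *ᵥ ·) := by
    rw [mulVec_injective_iff_isUnit, isUnit_iff_isUnit_det, ← Int.cast_det]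
    exact isUnit_iff_ne_zero.2 (Int.cast_ne_zero.2 hA)
  have hcone : coneOf A J = ⋃ k ∈ ({k | 0 < μ k} : Finset (Fin p)),
      coneOf (A.updateCol k w) (subconeClosed J μ k) := by
    simp only [coneOf_updateCol hw, ← Set.image_iUnion₂, ← RplusJ_eq_biUnion_image_exchange hμ]
    rfl
  rw [hcone, indicator_biUnion _ _ fun k hk k' hk' hne => ?_]
  · ext x
    simp
  rw [Function.onFun, coneOf_updateCol hw, coneOf_updateCol hw, Set.disjoint_image_iff hT]
  exact pairwiseDisjoint_image_exchange hk hk' hne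

end Cone

def IsUnimodularConeSum {p : ℕ} (f : (Fin p → ℝ) → ℝ) : Prop :=
  ∃ (n : ℕ) (B : Fin n → Matrix (Fin p) (Fin p) ℤ) (Js : Fin n → Finset (Fin p)),
    (∀ i, (B i).det = 1 ∨ (B i).det = -1) ∧
    ∀ x, f x = ∑ i, (coneOf (B i) (Js i)).indicator (fun _ => (1 : ℝ)) x

namespace IsUnimodularConeSum

variable {p : ℕ} {f g : (Fin p → ℝ) → ℝ}

lemma zero : IsUnimodularConeSum (0 : (Fin p → ℝ) → ℝ) :=
  ⟨0, Fin.elim0, Fin.elim0, Fin.rec0, fun _ => rfl⟩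

lemma add (hf : IsUnimodularConeSum f) (hg : IsUnimodularConeSum g) :
    IsUnimodularConeSum (f + g) := by
  obtain ⟨m, B, Js, hB, hf⟩ := hf
  obtain ⟨n, C, Ks, hC, hg⟩ := hg
  refine ⟨m + n, Fin.append B C, Fin.append Js Ks, Fin.addCases (by simpa using hB)
    (by simpa using hC), fun x => ?_⟩
  simp [Fin.sum_univ_add, hf, hg]

lemma indicator_coneOf {A : Matrix (Fin p) (Fin p) ℤ} (hA : A.det.natAbs = 1)
    (J : Finset (Fin p)) : IsUnimodularConeSum ((coneOf A J).indicator fun _ => (1 : ℝ)) :=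
  ⟨1, fun _ => A, fun _ => J, fun _ => by simpa using Int.natAbs_eq_iff.1 hA, fun x => by simp⟩

end IsUnimodularConeSum

theorem isUnimodularConeSum_indicator_coneOf {p : ℕ} {A : Matrix (Fin p) (Fin p) ℤ}
    (hA : A.det ≠ 0) (J : Finset (Fin p)) :
    IsUnimodularConeSum ((coneOf A J).indicator fun _ => (1 : ℝ)) := by
  induction hN : A.det.natAbs using Nat.strong_induction_on generalizing A J with
  | _ N ih =>
  by_cases h1 : A.det.natAbs = 1
  · exact .indicator_coneOf h1 J
  obtain ⟨μ, w, hw, hμ, hμ1⟩ := exists_intCast_mem_parallelepiped A hA h1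
  rw [indicator_coneOf_eq_sum hA hw hμ]
  refine sum_induction _ _ (fun _ _ => .add) .zero fun k hk => ?_
  obtain ⟨hk0, hlt⟩ := natAbs_det_updateCol_lt hw (by simpa using hk) (hμ1 k) hA
  exact ih _ (hN ▸ hlt) hk0 _ rfl

end HalfOpenCone

theorem stmt18_general (p : ℕ) (A : Matrix (Fin p) (Fin p) ℤ)
    (hA : A.det ≠ 0) (J : Finset (Fin p)) :
    ∃ (n : ℕ) (B : Fin n → Matrix (Fin p) (Fin p) ℤ)
      (Js : Fin n → Finset (Fin p)),
      (∀ i, (B i).det = 1 ∨ (B i).det = -1) ∧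
      ∀ x : Fin p → ℝ,
        Set.indicator (coneOf A J) (fun _ => (1 : ℝ)) x =
          ∑ i, Set.indicator (coneOf (B i) (Js i)) (fun _ => (1 : ℝ)) x :=
  HalfOpenCone.isUnimodularConeSum_indicator_coneOf hA J

theorem stmt18 (p : ℕ) (hp : 1 ≤ p) (A : Matrix (Fin p) (Fin p) ℤ)
    (hA : A.det ≠ 0) (J : Finset (Fin p)) :
    ∃ (n : ℕ) (B : Fin n → Matrix (Fin p) (Fin p) ℤ)
      (Js : Fin n → Finset (Fin p)),
      (∀ i, (B i).det = 1 ∨ (B i).det = -1) ∧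
      ∀ x : Fin p → ℝ,
        Set.indicator (coneOf A J) (fun _ => (1 : ℝ)) x =
          ∑ i, Set.indicator (coneOf (B i) (Js i)) (fun _ => (1 : ℝ)) x :=
  stmt18_general p A hA J
end
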